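/- Let I be the ideal of ℚ[x,y] generated by ∂f/∂x = 3x² + y⁵ and ∂f/∂y = 7y⁶ + 5xy⁴ where f = x³ + y⁷ + xy⁵. Then (25y + 147)·x⁴ ∈ I and (25y + 147)·y⁸ ∈ I, but x⁴ ∉ I. -/
import Mathlib


open MvPolynomial

noncomputable def x : MvPolynomial (Fin 2) ℚ := X 0
noncomputable def y : MvPolynomial (Fin 2) ℚ := X 1

/-- The Jacobian ideal of the E₁₂ polynomial `f = x³ + y⁷ + x y⁵` in ℚ[x,y]. -/
noncomputable def J : Ideal (MvPolynomial (Fin 2) ℚ) :=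
  Ideal.span {C 3 * x ^ 2 + y ^ 5, C 7 * y ^ 6 + C 5 * x * y ^ 4}

theorem stmt18 :
    (C 25 * y + C 147) * x ^ 4 ∈ J ∧
    (C 25 * y + C 147) * y ^ 8 ∈ J ∧
    x ^ 4 ∉ J := by
  refine ⟨?_, ?_, ?_⟩
  · have h9 : (C 9 : MvPolynomial (Fin 2) ℚ) * ((C 25 * y + C 147) * x ^ 4) ∈ J := by
      rw [J, Ideal.mem_span_pair]
      refine ⟨C 75 * x ^ 2 * y + C 441 * x ^ 2 - C 147 * y ^ 5,
        C 21 * y ^ 4 - C 15 * x * y ^ 2, ?_⟩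
      simp only [map_ofNat]
      ring
    have heq : (C 25 * y + C 147) * x ^ 4 =
        C ((9 : ℚ)⁻¹) * ((C 9 : MvPolynomial (Fin 2) ℚ) * ((C 25 * y + C 147) * x ^ 4)) := by
      rw [← mul_assoc, ← C_mul]
      norm_num
    rw [heq]
    exact Ideal.mul_mem_left _ _ h9
  · rw [J, Ideal.mem_span_pair]
    refine ⟨C 25 * y ^ 4, C 21 * y ^ 2 - C 15 * x, ?_⟩
    simp only [map_ofNat]
    ring
  · intro h
    rw [J, Ideal.mem_span_pair] at h
    obtain ⟨a, b, hab⟩ := h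
    have := congrArg (eval ![(-151263/3125 : ℚ), -147/25]) hab
    simp only [map_add, map_mul, map_pow, eval_C, x, y, eval_X] at this
    norm_num [Matrix.cons_val_zero, Matrix.cons_val_one] at this
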